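/- arXiv:1606.07749 — 3 statements merged into one kernel-verified Lean document; each statement's English description precedes it below -/
import Mathlib

section
/- Let I be a symmetric positive definite k×k real matrix, Ṡ a d×k real matrix of full rank d with d < k, and L a k×(k−d) real matrix whose columns form a basis of the kernel of Ṡ (equivalently, of the orthogonal complement of the row space of Ṡ). Then L (Lᵀ I L)⁻¹ Lᵀ I + I⁻¹ Ṡᵀ (Ṡ I⁻¹ Ṡᵀ)⁻¹ Ṡ equals the k×k identity matrix. -/
/-!
`P = L (Lᵀ I L)⁻¹ Lᵀ I` and `Q = I⁻¹ Ṡᵀ (Ṡ I⁻¹ Ṡᵀ)⁻¹ Ṡ` are the projections onto `ker Ṡ` and onto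
its `I`-orthogonal complement. Concretely, `Ṡ Q = Ṡ`, so the columns of `1 - Q` lie in
`ker Ṡ = range L` and `1 - Q = L A` for some `A`; since `P L = L` and `P Q = 0` (because `Ṡ L = 0`),
`P = P (1 - Q) = L A = 1 - Q`.
-/

open Matrix

namespace Matrix

variable {R m n p : Type*}

theorem exists_mul_eq_of_range_mulVec_subset [Fintype n] [Fintype p] [DecidableEq p] [Semiring R]
    {L : Matrix m n R} {X : Matrix m p R} (h : Set.range X.mulVec ⊆ Set.range L.mulVec) :
    ∃ A : Matrix n p R, L * A = X := by
  choose a ha using fun j : p => h ⟨Pi.single j 1, rfl⟩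
  refine ⟨(of a)ᵀ, ext fun i j => ?_⟩
  have hij := congrFun (ha j) i
  rw [mulVec_single_one] at hij
  simpa [mulVec, dotProduct, mul_apply] using hij

theorem linearIndependent_row_of_rank_eq_card [Fintype m] [Fintype n] [Field R]
    {M : Matrix m n R} (h : M.rank = Fintype.card m) : LinearIndependent R M.row := by
  rw [linearIndependent_iff_card_eq_finrank_span, ← h, rank_eq_finrank_span_row]
  rfl

namespace PosDef

variable [Fintype m] [Fintype n] [CommRing R] [PartialOrder R] [StarRing R]
  [TrivialStar R] {A : Matrix n n R}

theorem transpose_mul_mul_same (hA : A.PosDef) {B : Matrix n m R}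
    (hB : Function.Injective B.mulVec) : (Bᵀ * A * B).PosDef := by
  simpa only [conjTranspose_eq_transpose_of_trivial] using hA.conjTranspose_mul_mul_same hB

theorem mul_mul_transpose_same (hA : A.PosDef) {B : Matrix m n R}
    (hB : Function.Injective B.vecMul) : (B * A * Bᵀ).PosDef := by
  simpa only [conjTranspose_eq_transpose_of_trivial] using hA.mul_mul_conjTranspose_same hB

end PosDef

end Matrix

theorem projection_decomposition_eq_one_general
    {k d : ℕ}
    (I : Matrix (Fin k) (Fin k) ℝ) (hI : I.PosDef)
    (S : Matrix (Fin d) (Fin k) ℝ) (hSrank : S.rank = d)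
    (L : Matrix (Fin k) (Fin (k - d)) ℝ)
    (hLinj : Function.Injective L.mulVec)
    (hLker : Set.range L.mulVec = {v | S.mulVec v = 0}) :
    L * (Lᵀ * I * L)⁻¹ * Lᵀ * I + I⁻¹ * Sᵀ * (S * I⁻¹ * Sᵀ)⁻¹ * S = 1 := by
  set P := L * (Lᵀ * I * L)⁻¹ * Lᵀ * I
  set Q := I⁻¹ * Sᵀ * (S * I⁻¹ * Sᵀ)⁻¹ * S
  have hLIL : IsUnit (Lᵀ * I * L).det := (hI.transpose_mul_mul_same hLinj).det_pos.ne'.isUnit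
  have hSIS : IsUnit (S * I⁻¹ * Sᵀ).det :=
    (hI.inv.mul_mul_transpose_same <| vecMul_injective_iff.2 <|
      linearIndependent_row_of_rank_eq_card <| hSrank.trans (Fintype.card_fin d).symm)
      |>.det_pos.ne'.isUnit
  have hSL : S * L = 0 := ext_iff_mulVec.2 fun v => by
    simpa [← mulVec_mulVec] using hLker.subset ⟨v, rfl⟩
  have hPL : P * L = L := by
    simp only [P, Matrix.mul_assoc] at hLIL ⊢
    rw [nonsing_inv_mul _ hLIL, Matrix.mul_one]
  have hSQ : S * Q = S := by
    simp only [Q, ← Matrix.mul_assoc] at hSIS ⊢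
    rw [mul_nonsing_inv _ hSIS, Matrix.one_mul]
  have hPQ : P * Q = 0 := by
    have hLS : Lᵀ * I * (I⁻¹ * Sᵀ) = 0 := by
      rw [Matrix.mul_assoc, mul_nonsing_inv_cancel_left _ _ hI.det_pos.ne'.isUnit,
        ← transpose_mul, hSL, transpose_zero]
    calc P * Q = L * (Lᵀ * I * L)⁻¹ * (Lᵀ * I * (I⁻¹ * Sᵀ)) * (S * I⁻¹ * Sᵀ)⁻¹ * S := by
          simp only [P, Q, Matrix.mul_assoc]
      _ = 0 := by rw [hLS, Matrix.mul_zero, Matrix.zero_mul, Matrix.zero_mul]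
  obtain ⟨A, hA⟩ : ∃ A : Matrix (Fin (k - d)) (Fin k) ℝ, L * A = 1 - Q := by
    refine exists_mul_eq_of_range_mulVec_subset ?_
    rintro _ ⟨v, rfl⟩
    rw [hLker]
    simp [mulVec_mulVec, Matrix.mul_sub, hSQ]
  calc P + Q = P * (1 - Q) + Q := by rw [Matrix.mul_sub, hPQ, Matrix.mul_one, sub_zero]
    _ = 1 := by rw [← hA, ← Matrix.mul_assoc, hPL, hA, sub_add_cancel]

/-- If `I` is symmetric positive definite, `Ṡ` is `d×k` of full rank `d < k`, and the
columns of `L` form a basis of the kernel of `Ṡ`, then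
`L (Lᵀ I L)⁻¹ Lᵀ I + I⁻¹ Ṡᵀ (Ṡ I⁻¹ Ṡᵀ)⁻¹ Ṡ` is the identity. -/
theorem projection_decomposition_eq_one
    {k d : ℕ} (hdk : d < k)
    (I : Matrix (Fin k) (Fin k) ℝ) (hI : I.PosDef)
    (S : Matrix (Fin d) (Fin k) ℝ) (hSrank : S.rank = d)
    (L : Matrix (Fin k) (Fin (k - d)) ℝ)
    (hLinj : Function.Injective L.mulVec)
    (hLker : Set.range L.mulVec = {v | S.mulVec v = 0}) :
    L * (Lᵀ * I * L)⁻¹ * Lᵀ * I + I⁻¹ * Sᵀ * (S * I⁻¹ * Sᵀ)⁻¹ * S = 1 :=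
  projection_decomposition_eq_one_general I hI S hSrank L hLinj hLker
end

section
/- Let I be a symmetric positive definite k×k real matrix, Ṡ a d×k real matrix of full rank d with d < k, and L a k×(k−d) real matrix whose columns form a basis of the kernel of Ṡ. Then the matrix L (Lᵀ I L)⁻¹ Lᵀ = I⁻¹ − I⁻¹ Ṡᵀ (Ṡ I⁻¹ Ṡᵀ)⁻¹ Ṡ I⁻¹ is symmetric positive semidefinite of rank exactly k − d. -/
open Matrix

/-!
`P I` with `P = L (Lᵀ I L)⁻¹ Lᵀ` fixes the columns of `L` and kills `Q = I⁻¹ Sᵀ (S I⁻¹ Sᵀ)⁻¹ S`,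
while `1 - Q` maps into `ker S = range L`; hence `P I = 1 - Q`, which is the identity after
multiplying by `I⁻¹` on the right. Positive semidefiniteness is that of a congruence of
`(Lᵀ I L)⁻¹`, and `P` has the rank of `L` because `P I L = L`.
-/

namespace Matrix

variable {m n p : Type*} [Fintype n] [Fintype p]

theorem rank_eq_card_iff_mulVec_injective {K : Type*} [Field K] (A : Matrix m n K) :
    A.rank = Fintype.card n ↔ Function.Injective A.mulVec := by
  have h := LinearMap.finrank_range_add_finrank_ker A.mulVecLin
  rw [Module.finrank_fintype_fun_eq_card] at h
  rw [Matrix.rank, ← coe_mulVecLin, ← LinearMap.ker_eq_bot, ← Submodule.finrank_eq_zero]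
  omega

theorem rank_mul_eq_left_of_mul_mul_eq_self {R : Type*} [CommRing R] [StrongRankCondition R]
    {A : Matrix m n R} (X : Matrix n p R) {Y : Matrix p n R} (h : A * X * Y = A) :
    (A * X).rank = A.rank :=
  le_antisymm (rank_mul_le_left A X) ((congrArg rank h).symm.trans_le (rank_mul_le_left _ Y))

variable {R : Type*} [CommRing R] [DecidableEq p]

theorem mul_inv_mul_transpose_mul_mul_eq_self {I : Matrix n n R} {L : Matrix n p R}
    (hLIL : IsUnit (Lᵀ * I * L).det) : L * (Lᵀ * I * L)⁻¹ * Lᵀ * I * L = L := by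
  rw [show L * (Lᵀ * I * L)⁻¹ * Lᵀ * I * L = L * ((Lᵀ * I * L)⁻¹ * (Lᵀ * I * L)) by
    simp only [Matrix.mul_assoc], nonsing_inv_mul _ hLIL, Matrix.mul_one]

variable [Fintype m] [DecidableEq m] [DecidableEq n]

theorem mul_inv_mul_transpose_eq_inv_sub {I : Matrix n n R} (hI : IsUnit I.det)
    {S : Matrix m n R} {L : Matrix n p R} (hLIL : IsUnit (Lᵀ * I * L).det)
    (hSIS : IsUnit (S * I⁻¹ * Sᵀ).det) (hLker : Set.range L.mulVec = {v | S *ᵥ v = 0}) :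
    L * (Lᵀ * I * L)⁻¹ * Lᵀ = I⁻¹ - I⁻¹ * Sᵀ * (S * I⁻¹ * Sᵀ)⁻¹ * S * I⁻¹ := by
  set P := L * (Lᵀ * I * L)⁻¹ * Lᵀ
  set Q := I⁻¹ * Sᵀ * (S * I⁻¹ * Sᵀ)⁻¹ * S
  have hSL : S * L = 0 := ext_iff_mulVec.2 fun w => by
    rw [← mulVec_mulVec, zero_mulVec]
    exact (hLker.le ⟨w, rfl⟩ : _)
  have hPIL : P * I * L = L := mul_inv_mul_transpose_mul_mul_eq_self hLIL
  have hPIQ : P * I * Q = 0 := by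
    have hLS : Lᵀ * Sᵀ = 0 := by rw [← transpose_mul, hSL, transpose_zero]
    rw [show P * I * Q = L * (Lᵀ * I * L)⁻¹ * (Lᵀ * (I * I⁻¹) * Sᵀ) * (S * I⁻¹ * Sᵀ)⁻¹ * S by
      simp only [P, Q, Matrix.mul_assoc], mul_nonsing_inv _ hI, Matrix.mul_one, hLS]
    simp only [Matrix.mul_zero, Matrix.zero_mul]
  have hSQ : S * Q = S := by
    simp only [Q, ← Matrix.mul_assoc, mul_nonsing_inv _ hSIS, Matrix.one_mul]
  have hPI : P * I = 1 - Q := ext_iff_mulVec.2 fun v => by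
    obtain ⟨w, hw⟩ : v - Q *ᵥ v ∈ Set.range L.mulVec := by
      rw [hLker]
      simp [mulVec_sub, mulVec_mulVec, hSQ]
    calc (P * I) *ᵥ v = (P * I) *ᵥ (L *ᵥ w + Q *ᵥ v) := by rw [hw, sub_add_cancel]
      _ = (1 - Q) *ᵥ v := by
        rw [mulVec_add, mulVec_mulVec, mulVec_mulVec, hPIL, hPIQ, zero_mulVec, add_zero, hw,
          sub_mulVec, one_mulVec]
  calc P = P * I * I⁻¹ := by rw [Matrix.mul_assoc, mul_nonsing_inv _ hI, Matrix.mul_one]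
    _ = _ := by rw [hPI, Matrix.sub_mul, Matrix.one_mul]

end Matrix

theorem constrained_bound_posSemidef_rank_general
    {k d : ℕ}
    (I : Matrix (Fin k) (Fin k) ℝ) (hI : I.PosDef)
    (S : Matrix (Fin d) (Fin k) ℝ) (hSrank : S.rank = d)
    (L : Matrix (Fin k) (Fin (k - d)) ℝ)
    (hLinj : Function.Injective L.mulVec)
    (hLker : Set.range L.mulVec = {v | S.mulVec v = 0}) :
    L * (Lᵀ * I * L)⁻¹ * Lᵀ = I⁻¹ - I⁻¹ * Sᵀ * (S * I⁻¹ * Sᵀ)⁻¹ * S * I⁻¹ ∧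
      (L * (Lᵀ * I * L)⁻¹ * Lᵀ).PosSemidef ∧
      (L * (Lᵀ * I * L)⁻¹ * Lᵀ).rank = k - d := by
  have hS : Function.Injective S.vecMul := by
    have h := (rank_eq_card_iff_mulVec_injective Sᵀ).1
      (by rw [rank_transpose, hSrank, Fintype.card_fin])
    rwa [show Sᵀ.mulVec = S.vecMul from funext (mulVec_transpose S)] at h
  have hLIL : (Lᵀ * I * L).PosDef := by
    have h := hI.conjTranspose_mul_mul_same hLinj
    rwa [conjTranspose_eq_transpose_of_trivial] at h
  have hSIS : (S * I⁻¹ * Sᵀ).PosDef := by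
    have h := hI.inv.mul_mul_conjTranspose_same hS
    rwa [conjTranspose_eq_transpose_of_trivial] at h
  have hLILu : IsUnit (Lᵀ * I * L).det := hLIL.det_pos.ne'.isUnit
  refine ⟨mul_inv_mul_transpose_eq_inv_sub hI.det_pos.ne'.isUnit hLILu
    hSIS.det_pos.ne'.isUnit hLker, ?_, ?_⟩
  · have h := hLIL.inv.posSemidef.mul_mul_conjTranspose_same L
    rwa [conjTranspose_eq_transpose_of_trivial] at h
  · have hPIL : L * ((Lᵀ * I * L)⁻¹ * Lᵀ) * (I * L) = L := by
      simpa only [Matrix.mul_assoc] using mul_inv_mul_transpose_mul_mul_eq_self hLILu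
    rw [Matrix.mul_assoc, rank_mul_eq_left_of_mul_mul_eq_self _ hPIL,
      (rank_eq_card_iff_mulVec_injective L).2 hLinj, Fintype.card_fin]

/-- If `I` is symmetric positive definite, `Ṡ` is `d×k` of full rank `d < k`, and the
columns of `L` form a basis of the kernel of `Ṡ`, then
`L (Lᵀ I L)⁻¹ Lᵀ = I⁻¹ − I⁻¹ Ṡᵀ (Ṡ I⁻¹ Ṡᵀ)⁻¹ Ṡ I⁻¹` is symmetric positive
semidefinite of rank exactly `k − d`. -/
theorem constrained_bound_posSemidef_rank
    {k d : ℕ} (hdk : d < k)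
    (I : Matrix (Fin k) (Fin k) ℝ) (hI : I.PosDef)
    (S : Matrix (Fin d) (Fin k) ℝ) (hSrank : S.rank = d)
    (L : Matrix (Fin k) (Fin (k - d)) ℝ)
    (hLinj : Function.Injective L.mulVec)
    (hLker : Set.range L.mulVec = {v | S.mulVec v = 0}) :
    L * (Lᵀ * I * L)⁻¹ * Lᵀ = I⁻¹ - I⁻¹ * Sᵀ * (S * I⁻¹ * Sᵀ)⁻¹ * S * I⁻¹ ∧
      (L * (Lᵀ * I * L)⁻¹ * Lᵀ).PosSemidef ∧
      (L * (Lᵀ * I * L)⁻¹ * Lᵀ).rank = k - d :=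
  constrained_bound_posSemidef_rank_general I hI S hSrank L hLinj hLker
end

section
/- Let I be a symmetric positive definite k×k real matrix, R a k×d real matrix of full column rank d with d < k, L a k×(k−d) real matrix whose columns form a basis of the orthogonal complement of the column space of R, and α ∈ ℝ^k a fixed vector. Then for every θ̂ ∈ ℝ^k, θ̂ − I⁻¹ R (Rᵀ I⁻¹ R)⁻¹ Rᵀ (θ̂ − α) = α + L (Lᵀ I L)⁻¹ Lᵀ I (θ̂ − α); i.e., the constrained estimator of the linear case can be written in either of these two equivalent forms. -/
/-!
Write `P = I⁻¹ R (Rᵀ I⁻¹ R)⁻¹ Rᵀ` and `Q = L (Lᵀ I L)⁻¹ Lᵀ I`. From `Rᵀ L = 0` one gets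
`Rᵀ P = Rᵀ`, `Rᵀ Q = 0`, `Lᵀ I P = 0` and `Lᵀ I Q = Lᵀ I`, so every column of `1 - P - Q` lies
in `ker Rᵀ = range L` and is killed by `Lᵀ I`. Since `Lᵀ I L` is invertible, `Lᵀ I` is injective
on `range L`; hence `P + Q = 1`, and the two forms of the estimator agree.
-/

open Matrix

namespace Matrix

variable {K m n p : Type*} [Field K] [Fintype m] [Fintype n] [Fintype p] [DecidableEq p]

theorem eq_zero_of_mem_range_of_transpose_mul_mulVec_eq_zero {I : Matrix m m K}
    {L : Matrix m p K} (hC : IsUnit (Lᵀ * I * L)) {v : m → K} (hv : v ∈ Set.range L.mulVec)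
    (hIv : (Lᵀ * I) *ᵥ v = 0) : v = 0 := by
  obtain ⟨c, rfl⟩ := hv
  have hc : (Lᵀ * I * L) *ᵥ c = (Lᵀ * I * L) *ᵥ 0 := by
    rw [← mulVec_mulVec, hIv, mulVec_zero]
  rw [mulVec_injective_iff_isUnit.2 hC hc, mulVec_zero]

theorem inv_mul_mul_inv_mul_transpose_add_mul_inv_mul_transpose_mul_eq_one
    [DecidableEq m] [DecidableEq n] {I : Matrix m m K} {R : Matrix m n K}
    {L : Matrix m p K} (hI : IsUnit I) (hA : IsUnit (Rᵀ * I⁻¹ * R))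
    (hC : IsUnit (Lᵀ * I * L)) (hL : Set.range L.mulVec = {v | Rᵀ *ᵥ v = 0}) :
    I⁻¹ * R * (Rᵀ * I⁻¹ * R)⁻¹ * Rᵀ + L * (Lᵀ * I * L)⁻¹ * Lᵀ * I = 1 := by
  set P := I⁻¹ * R * (Rᵀ * I⁻¹ * R)⁻¹ * Rᵀ
  set Q := L * (Lᵀ * I * L)⁻¹ * Lᵀ * I
  have hRL : Rᵀ * L = 0 := ext_iff_mulVec.2 fun c => by
    rw [← mulVec_mulVec, zero_mulVec]
    exact (hL ▸ Set.mem_range_self c : L *ᵥ c ∈ {v | Rᵀ *ᵥ v = 0})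
  have hRP : Rᵀ * P = Rᵀ := by
    simp only [P, ← Matrix.mul_assoc, mul_nonsing_inv _ ((isUnit_iff_isUnit_det _).1 hA),
      Matrix.one_mul]
  have hRQ : Rᵀ * Q = 0 := by
    simp only [Q, ← Matrix.mul_assoc, hRL, Matrix.zero_mul]
  have hLP : Lᵀ * I * P = 0 := by
    have hLR : Lᵀ * R = 0 := by simpa using congrArg transpose hRL
    simp only [P, ← Matrix.mul_assoc, Matrix.mul_assoc Lᵀ I I⁻¹,
      mul_nonsing_inv _ ((isUnit_iff_isUnit_det _).1 hI), Matrix.mul_one, hLR, Matrix.zero_mul]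
  have hLQ : Lᵀ * I * Q = Lᵀ * I := by
    simp only [Q, ← Matrix.mul_assoc, mul_nonsing_inv _ ((isUnit_iff_isUnit_det _).1 hC),
      Matrix.one_mul]
  refine sub_eq_zero.1 <| ext_iff_mulVec.2 fun x => (zero_mulVec x).symm ▸ ?_
  refine eq_zero_of_mem_range_of_transpose_mul_mulVec_eq_zero hC ?_ ?_
  · rw [hL]
    simp [mulVec_mulVec, Matrix.mul_sub, Matrix.mul_add, hRP, hRQ]
  · simp [mulVec_mulVec, Matrix.mul_sub, Matrix.mul_add, hLP, hLQ]

end Matrix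

theorem linear_constrained_estimator_two_forms_general
    {k d : ℕ}
    (I : Matrix (Fin k) (Fin k) ℝ) (hI : I.PosDef)
    (R : Matrix (Fin k) (Fin d) ℝ) (hRinj : Function.Injective R.mulVec)
    (L : Matrix (Fin k) (Fin (k - d)) ℝ)
    (hLinj : Function.Injective L.mulVec)
    (hLperp : Set.range L.mulVec = {v : Fin k → ℝ | Rᵀ.mulVec v = 0})
    (α θhat : Fin k → ℝ) :
    θhat - (I⁻¹ * R * (Rᵀ * I⁻¹ * R)⁻¹ * Rᵀ).mulVec (θhat - α)
      = α + (L * (Lᵀ * I * L)⁻¹ * Lᵀ * I).mulVec (θhat - α) := by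
  have hA : (Rᵀ * I⁻¹ * R).PosDef := by
    simpa using hI.inv.conjTranspose_mul_mul_same hRinj
  have hC : (Lᵀ * I * L).PosDef := by
    simpa using hI.conjTranspose_mul_mul_same hLinj
  have hQ := eq_sub_of_add_eq' <|
    inv_mul_mul_inv_mul_transpose_add_mul_inv_mul_transpose_mul_eq_one hI.isUnit hA.isUnit
      hC.isUnit hLperp
  rw [hQ, sub_mulVec, one_mulVec]
  abel

/-- Linear constraint case: if `I` is symmetric positive definite, `R` is `k×d` of full
column rank `d < k`, and the columns of `L` form a basis of the orthogonal complement of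
the column space of `R` (i.e. of the kernel of `Rᵀ`), then for all `θ̂, α ∈ ℝ^k`,
`θ̂ − I⁻¹ R (Rᵀ I⁻¹ R)⁻¹ Rᵀ (θ̂ − α) = α + L (Lᵀ I L)⁻¹ Lᵀ I (θ̂ − α)`. -/
theorem linear_constrained_estimator_two_forms
    {k d : ℕ} (hdk : d < k)
    (I : Matrix (Fin k) (Fin k) ℝ) (hI : I.PosDef)
    (R : Matrix (Fin k) (Fin d) ℝ) (hRinj : Function.Injective R.mulVec)
    (L : Matrix (Fin k) (Fin (k - d)) ℝ)
    (hLinj : Function.Injective L.mulVec)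
    (hLperp : Set.range L.mulVec = {v : Fin k → ℝ | Rᵀ.mulVec v = 0})
    (α θhat : Fin k → ℝ) :
    θhat - (I⁻¹ * R * (Rᵀ * I⁻¹ * R)⁻¹ * Rᵀ).mulVec (θhat - α)
      = α + (L * (Lᵀ * I * L)⁻¹ * Lᵀ * I).mulVec (θhat - α) :=
  linear_constrained_estimator_two_forms_general I hI R hRinj L hLinj hLperp α θhat
end
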